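/- Let A, B, C, D be finite-valued random variables. If I(A; D | B, C) = 0 and I(A; C) ≥ I(A; C | B), then I(A; (C, D)) ≥ I(A; (C, D) | B). -/

import Mathlib

open scoped BigOperators

noncomputable section

/-- Probability that the random variable `X` takes the value `a`,
with respect to the probability mass function `p` on the finite sample space `Ω`. -/
def prob {Ω : Type*} [Fintype Ω] {α : Type*} [DecidableEq α]
    (p : Ω → ℝ) (X : Ω → α) (a : α) : ℝ :=
  ∑ ω, if X ω = a then p ω else 0

/-- Shannon entropy (base 2) of the random variable `X`. -/
def ent {Ω : Type*} [Fintype Ω] {α : Type*} [Fintype α] [DecidableEq α]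
    (p : Ω → ℝ) (X : Ω → α) : ℝ :=
  -∑ a, prob p X a * Real.logb 2 (prob p X a)

/-- Conditional entropy `H(X|Y)`. -/
def condEnt {Ω : Type*} [Fintype Ω] {α β : Type*} [Fintype α] [DecidableEq α]
    [Fintype β] [DecidableEq β] (p : Ω → ℝ) (X : Ω → α) (Y : Ω → β) : ℝ :=
  ent p (fun ω => (X ω, Y ω)) - ent p Y

/-- Mutual information `I(X;Y)`. -/
def mi {Ω : Type*} [Fintype Ω] {α β : Type*} [Fintype α] [DecidableEq α]
    [Fintype β] [DecidableEq β] (p : Ω → ℝ) (X : Ω → α) (Y : Ω → β) : ℝ :=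
  ent p X + ent p Y - ent p (fun ω => (X ω, Y ω))

/-- Conditional mutual information `I(X;Y|Z)`. -/
def cmi {Ω : Type*} [Fintype Ω] {α β γ : Type*} [Fintype α] [DecidableEq α]
    [Fintype β] [DecidableEq β] [Fintype γ] [DecidableEq γ]
    (p : Ω → ℝ) (X : Ω → α) (Y : Ω → β) (Z : Ω → γ) : ℝ :=
  ent p (fun ω => (X ω, Z ω)) + ent p (fun ω => (Y ω, Z ω))
    - ent p (fun ω => (X ω, Y ω, Z ω)) - ent p Z

/-!
Chain rule: `I(A; C,D) - I(A; C,D | B) = (I(A;C) - I(A;C|B)) + I(A;D|C) - I(A;D|B,C)`. The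
bracket is nonnegative by hypothesis, the last term vanishes, and `I(A;D|C) ≥ 0`.

Nonnegativity of `I(X;Y|Z)` is Gibbs' inequality against `q(x,y,z) = P(x,z) P(y,z) / P(z)`, the
distribution making `X` and `Y` conditionally independent given `Z`; it has total mass one, and
`log t ≥ 1 - 1/t` bounds each term once every entropy is written as an expectation over `Ω`.
-/

section Prob

variable {Ω : Type*} [Fintype Ω] (p : Ω → ℝ) {α β : Type*} [DecidableEq α] [DecidableEq β]

lemma prob_nonneg (hp : ∀ ω, 0 ≤ p ω) (X : Ω → α) (a : α) : 0 ≤ prob p X a :=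
  Finset.sum_nonneg fun ω _ => by split_ifs <;> simp [hp ω]

lemma le_prob_apply (hp : ∀ ω, 0 ≤ p ω) (X : Ω → α) (ω : Ω) : p ω ≤ prob p X (X ω) := by
  unfold prob
  simpa using Finset.single_le_sum (f := fun ω' => if X ω' = X ω then p ω' else 0)
    (fun ω' _ => by split_ifs <;> simp [hp ω']) (Finset.mem_univ ω)

lemma sum_prob_mul [Fintype α] (X : Ω → α) (f : α → ℝ) :
    ∑ a, prob p X a * f a = ∑ ω, p ω * f (X ω) := by
  simp only [prob, Finset.sum_mul, ite_mul, zero_mul]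
  rw [Finset.sum_comm]
  simp

lemma sum_prob [Fintype α] (X : Ω → α) : ∑ a, prob p X a = ∑ ω, p ω := by
  simpa using sum_prob_mul p X 1

lemma sum_prob_pair_left [Fintype α] (X : Ω → α) (Y : Ω → β) (b : β) :
    ∑ a, prob p (fun ω => (X ω, Y ω)) (a, b) = prob p Y b := by
  simp only [prob, Prod.mk.injEq]
  rw [Finset.sum_comm]
  refine Finset.sum_congr rfl fun ω _ => ?_
  by_cases h : Y ω = b <;> simp [h]

lemma prob_comp_apply_of_injective {f : α → β} (hf : Function.Injective f) (X : Ω → α) (a : α) :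
    prob p (fun ω => f (X ω)) (f a) = prob p X a := by
  simp only [prob, hf.eq_iff]

end Prob

section Entropy

variable {Ω : Type*} [Fintype Ω] (p : Ω → ℝ) {α β γ δ : Type*} [Fintype α] [DecidableEq α]
  [Fintype β] [DecidableEq β] [Fintype γ] [DecidableEq γ] [Fintype δ] [DecidableEq δ]

lemma ent_eq_sum (X : Ω → α) :
    ent p X = -(∑ ω, p ω * Real.log (prob p X (X ω))) / Real.log 2 := by
  rw [ent, neg_div, Finset.sum_div]
  simp only [Real.logb, mul_div_assoc', ← Finset.sum_div,
    sum_prob_mul p X fun a => Real.log (prob p X a)]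

lemma ent_comp_of_injective {f : α → β} (hf : Function.Injective f) (X : Ω → α) :
    ent p (fun ω => f (X ω)) = ent p X := by
  simp only [ent_eq_sum, prob_comp_apply_of_injective p hf]

lemma cmi_eq_sum (X : Ω → α) (Y : Ω → β) (Z : Ω → γ) :
    cmi p X Y Z = (∑ ω, p ω * (Real.log (prob p (fun ω => (X ω, Y ω, Z ω)) (X ω, Y ω, Z ω))
      + Real.log (prob p Z (Z ω)) - Real.log (prob p (fun ω => (X ω, Z ω)) (X ω, Z ω))
      - Real.log (prob p (fun ω => (Y ω, Z ω)) (Y ω, Z ω)))) / Real.log 2 := by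
  simp only [cmi, ent_eq_sum, mul_add, mul_sub, Finset.sum_add_distrib, Finset.sum_sub_distrib]
  ring

lemma sum_prob_mul_prob_div_prob (hsum : ∑ ω, p ω = 1) (X : Ω → α) (Y : Ω → β) (Z : Ω → γ) :
    ∑ t : α × β × γ, prob p (fun ω => (X ω, Z ω)) (t.1, t.2.2)
      * prob p (fun ω => (Y ω, Z ω)) t.2 / prob p Z t.2.2 = 1 :=
  calc _ = ∑ z, (∑ x, prob p (fun ω => (X ω, Z ω)) (x, z))
        * (∑ y, prob p (fun ω => (Y ω, Z ω)) (y, z)) / prob p Z z := by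
        simp only [Fintype.sum_prod_type, Finset.sum_mul_sum, Finset.sum_div]
        exact (Finset.sum_congr rfl fun _ _ => Finset.sum_comm).trans Finset.sum_comm
    _ = ∑ z, prob p Z z := by simp only [sum_prob_pair_left, mul_self_div_self]
    _ = 1 := by rw [sum_prob, hsum]

lemma cmi_nonneg (hp : ∀ ω, 0 ≤ p ω) (hsum : ∑ ω, p ω = 1)
    (X : Ω → α) (Y : Ω → β) (Z : Ω → γ) : 0 ≤ cmi p X Y Z := by
  set r := prob p (fun ω => (X ω, Y ω, Z ω))
  set u := prob p (fun ω => (X ω, Z ω))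
  set v := prob p (fun ω => (Y ω, Z ω))
  set w := prob p Z
  set ratio : α × β × γ → ℝ := fun t => u (t.1, t.2.2) * v t.2 / (r t * w t.2.2)
  have log_bound : ∀ ω, p ω * (1 - ratio (X ω, Y ω, Z ω)) ≤ p ω * (Real.log (r (X ω, Y ω, Z ω))
      + Real.log (w (Z ω)) - Real.log (u (X ω, Z ω)) - Real.log (v (Y ω, Z ω))) := by
    intro ω
    rcases (hp ω).eq_or_lt with hω | hω
    · simp [← hω]
    have hr : 0 < r (X ω, Y ω, Z ω) := hω.trans_le (le_prob_apply p hp _ ω)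
    have hu : 0 < u (X ω, Z ω) := hω.trans_le (le_prob_apply p hp _ ω)
    have hv : 0 < v (Y ω, Z ω) := hω.trans_le (le_prob_apply p hp _ ω)
    have hw : 0 < w (Z ω) := hω.trans_le (le_prob_apply p hp _ ω)
    refine mul_le_mul_of_nonneg_left ?_ hω.le
    have := Real.one_sub_inv_le_log_of_pos (div_pos (mul_pos hr hw) (mul_pos hu hv))
    rwa [inv_div, Real.log_div (by positivity) (by positivity), Real.log_mul hr.ne' hw.ne',
      Real.log_mul hu.ne' hv.ne', ← sub_sub] at this
  have sum_ratio_le : ∑ ω, p ω * ratio (X ω, Y ω, Z ω) ≤ 1 := by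
    rw [← sum_prob_mul p (fun ω => (X ω, Y ω, Z ω)), ← sum_prob_mul_prob_div_prob p hsum X Y Z]
    refine Finset.sum_le_sum fun t _ => ?_
    rcases (prob_nonneg p hp _ t).eq_or_lt with ht | ht
    · rw [← ht, zero_mul]
      exact div_nonneg (mul_nonneg (prob_nonneg p hp _ _) (prob_nonneg p hp _ _))
        (prob_nonneg p hp _ _)
    · exact (mul_div_assoc' _ _ _).trans_le (mul_div_mul_left _ _ ht.ne').le
  rw [cmi_eq_sum]
  refine div_nonneg ?_ (Real.log_nonneg one_le_two)
  calc (0 : ℝ) ≤ ∑ ω, p ω * (1 - ratio (X ω, Y ω, Z ω)) := by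
        simp only [mul_sub, mul_one, Finset.sum_sub_distrib, hsum]
        linarith
    _ ≤ _ := Finset.sum_le_sum fun ω _ => log_bound ω

lemma mi_pair_eq_add_cmi (X : Ω → α) (Y : Ω → β) (Z : Ω → γ) :
    mi p X (fun ω => (Y ω, Z ω)) = mi p X Y + cmi p X Z Y := by
  have swap : ent p (fun ω => (Z ω, Y ω)) = ent p (fun ω => (Y ω, Z ω)) :=
    ent_comp_of_injective p Prod.swap_injective fun ω => (Y ω, Z ω)
  have swap_right : ent p (fun ω => (X ω, Z ω, Y ω)) = ent p (fun ω => (X ω, Y ω, Z ω)) :=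
    ent_comp_of_injective p (f := fun t : α × β × γ => (t.1, t.2.2, t.2.1))
      (fun _ _ h => by simp_all [Prod.ext_iff]) fun ω => (X ω, Y ω, Z ω)
  simp only [mi, cmi]
  linarith

lemma cmi_pair_eq_add_cmi (X : Ω → α) (Y : Ω → β) (Z : Ω → γ) (W : Ω → δ) :
    cmi p X (fun ω => (Y ω, Z ω)) W = cmi p X Y W + cmi p X Z (fun ω => (W ω, Y ω)) := by
  have e₁ : ent p (fun ω => (Y ω, W ω)) = ent p (fun ω => (W ω, Y ω)) :=
    ent_comp_of_injective p Prod.swap_injective fun ω => (W ω, Y ω)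
  have e₂ : ent p (fun ω => (X ω, Y ω, W ω)) = ent p (fun ω => (X ω, W ω, Y ω)) :=
    ent_comp_of_injective p (f := fun t : α × δ × β => (t.1, t.2.2, t.2.1))
      (fun _ _ h => by simp_all [Prod.ext_iff]) fun ω => (X ω, W ω, Y ω)
  have e₃ : ent p (fun ω => (Z ω, W ω, Y ω)) = ent p (fun ω => ((Y ω, Z ω), W ω)) :=
    ent_comp_of_injective p (f := fun t : (β × γ) × δ => (t.1.2, t.2, t.1.1))
      (fun _ _ h => by simp_all [Prod.ext_iff]) fun ω => ((Y ω, Z ω), W ω)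
  have e₄ : ent p (fun ω => (X ω, Z ω, W ω, Y ω)) = ent p (fun ω => (X ω, (Y ω, Z ω), W ω)) :=
    ent_comp_of_injective p (f := fun t : α × (β × γ) × δ => (t.1, t.2.1.2, t.2.2, t.2.1.1))
      (fun _ _ h => by simp_all [Prod.ext_iff]) fun ω => (X ω, (Y ω, Z ω), W ω)
  simp only [cmi]
  linarith

end Entropy

theorem stmt4 {Ω : Type*} [Fintype Ω] {α β γ δ : Type*}
    [Fintype α] [DecidableEq α] [Fintype β] [DecidableEq β]
    [Fintype γ] [DecidableEq γ] [Fintype δ] [DecidableEq δ]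
    (p : Ω → ℝ) (hp : ∀ ω, 0 ≤ p ω) (hsum : ∑ ω, p ω = 1)
    (A : Ω → α) (B : Ω → β) (C : Ω → γ) (D : Ω → δ)
    (h1 : cmi p A D (fun ω => (B ω, C ω)) = 0)
    (h2 : mi p A C ≥ cmi p A C B) :
    mi p A (fun ω => (C ω, D ω)) ≥ cmi p A (fun ω => (C ω, D ω)) B := by
  rw [mi_pair_eq_add_cmi, cmi_pair_eq_add_cmi, h1]
  linarith [cmi_nonneg p hp hsum A D C]
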